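/- Let (Ω, ℱ, P) be a probability space and let x, y : Ω → ℝᵐ be square-integrable random vectors with E[x | σ(y)] = y almost surely. Let f : ℝᵐ → ℝᵐ be a measurable function with f∘x square-integrable. Then E[⟨f(x) − y, x − y⟩] = Σ_{j=1}^{m} E[ Cov(f(x)_j, x_j | σ(y)) ], where ⟨·,·⟩ is the Euclidean inner product on ℝᵐ. -/

import Mathlib

open MeasureTheory Finset

/-- Conditional expectation `E[f | 𝒢]` under measure `μ` (ambient σ-algebra `mΩ`). -/
noncomputable def condExpect {Ω : Type*} {mΩ : MeasurableSpace Ω} (𝒢 : MeasurableSpace Ω)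
    (μ : @Measure Ω mΩ) {E : Type*} [NormedAddCommGroup E] [NormedSpace ℝ E] [CompleteSpace E]
    (f : Ω → E) : Ω → E :=
  MeasureTheory.condExp (α := Ω) (E := E) (m := 𝒢) (m₀ := mΩ) μ f

/-- Conditional covariance of two real random variables given a sub-σ-algebra `𝒢`:
`Cov(U, V | 𝒢) = E[U·V | 𝒢] − E[U | 𝒢]·E[V | 𝒢]`. -/
noncomputable def condCov {Ω : Type*} {mΩ : MeasurableSpace Ω} (𝒢 : MeasurableSpace Ω)
    (μ : @Measure Ω mΩ) (U V : Ω → ℝ) : Ω → ℝ :=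
  fun ω => condExpect 𝒢 μ (fun ω' => U ω' * V ω') ω
    - condExpect 𝒢 μ U ω * condExpect 𝒢 μ V ω

/-- Conditional variance: `Var(U | 𝒢) = Cov(U, U | 𝒢)`. -/
noncomputable def condVar {Ω : Type*} {mΩ : MeasurableSpace Ω} (𝒢 : MeasurableSpace Ω)
    (μ : @Measure Ω mΩ) (U : Ω → ℝ) : Ω → ℝ :=
  condCov 𝒢 μ U U

/-!
The inner product splits into coordinates, so it suffices to treat real `U = f(x)ⱼ`, `V = xⱼ`
and `W = yⱼ`, where `W` is `𝒢`-measurable and `E[V | 𝒢] = W`. Pulling `W` out of conditional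
expectations gives `E[Cov(U, V | 𝒢)] = E[UV] - E[WU]`, and the noise `V - W` is orthogonal to
`W`, so `E[(U - W)(V - W)] = E[UV] - E[WU] - E[W(V - W)] = E[UV] - E[WU]` as well.
-/

section

variable {Ω : Type*} {mΩ : MeasurableSpace Ω} {μ : Measure Ω} {𝒢 : MeasurableSpace Ω}

theorem integrable_mul_of_memLp_two {u v : Ω → ℝ} (hu : MemLp u 2 μ) (hv : MemLp v 2 μ) :
    Integrable (fun ω => u ω * v ω) μ :=
  hu.integrable_mul hv

theorem integral_mul_condExp_of_stronglyMeasurable (hm : 𝒢 ≤ mΩ) [SigmaFinite (μ.trim hm)]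
    {W U : Ω → ℝ} (hW : StronglyMeasurable[𝒢] W) (hWU : Integrable (W * U) μ)
    (hU : Integrable U μ) :
    ∫ ω, W ω * μ[U|𝒢] ω ∂μ = ∫ ω, W ω * U ω ∂μ :=
  (integral_congr_ae (condExp_mul_of_stronglyMeasurable_left hW hWU hU)).symm.trans
    (integral_condExp hm)

theorem condExp_piLp_apply_ae_eq {ι : Type*} [Fintype ι] {p : ENNReal} [Fact (1 ≤ p)]
    {E : ι → Type*} [∀ i, NormedAddCommGroup (E i)] [∀ i, NormedSpace ℝ (E i)]
    [∀ i, CompleteSpace (E i)]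
    {f : Ω → PiLp p E} (hf : Integrable f μ) (i : ι) :
    μ[fun ω => f ω i|𝒢] =ᵐ[μ] fun ω => μ[f|𝒢] ω i :=
  ((PiLp.proj (𝕜 := ℝ) p E i).comp_condExp_comm hf).symm

variable [IsFiniteMeasure μ] {U V W : Ω → ℝ}

theorem integral_mul_sub_eq_zero_of_condExp_ae_eq (hm : 𝒢 ≤ mΩ) (hV : MemLp V 2 μ)
    (hW : MemLp W 2 μ) (hW𝒢 : StronglyMeasurable[𝒢] W) (hVW : μ[V|𝒢] =ᵐ[μ] W) :
    ∫ ω, W ω * (V ω - W ω) ∂μ = 0 := by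
  have hWV : ∫ ω, W ω * V ω ∂μ = ∫ ω, W ω * W ω ∂μ := by
    rw [← integral_mul_condExp_of_stronglyMeasurable hm hW𝒢
      (integrable_mul_of_memLp_two hW hV) (hV.integrable one_le_two)]
    refine integral_congr_ae ?_
    filter_upwards [hVW] with ω h
    rw [h]
  simp_rw [mul_sub]
  rw [integral_sub (integrable_mul_of_memLp_two hW hV) (integrable_mul_of_memLp_two hW hW), hWV,
    sub_self]

theorem integral_condCov_of_condExp_ae_eq (hm : 𝒢 ≤ mΩ) (hU : MemLp U 2 μ) (hW : MemLp W 2 μ)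
    (hW𝒢 : StronglyMeasurable[𝒢] W) (hVW : μ[V|𝒢] =ᵐ[μ] W) :
    ∫ ω, condCov 𝒢 μ U V ω ∂μ = ∫ ω, U ω * V ω ∂μ - ∫ ω, W ω * U ω ∂μ := by
  have hpull := condExp_mul_of_stronglyMeasurable_left hW𝒢
    (integrable_mul_of_memLp_two hW hU) (hU.integrable one_le_two)
  have hcov :
      condCov 𝒢 μ U V =ᵐ[μ] fun ω => μ[fun ω' => U ω' * V ω'|𝒢] ω - μ[W * U|𝒢] ω := by
    filter_upwards [hVW, hpull] with ω hV' hpull'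
    simp only [condCov, condExpect]
    rw [hV', hpull', Pi.mul_apply, mul_comm (W ω)]
  rw [integral_congr_ae hcov, integral_sub integrable_condExp integrable_condExp,
    integral_condExp hm, integral_condExp hm, Pi.mul_def]

theorem integral_sub_mul_sub_eq_integral_condCov (hm : 𝒢 ≤ mΩ) (hU : MemLp U 2 μ)
    (hV : MemLp V 2 μ) (hW : MemLp W 2 μ) (hW𝒢 : StronglyMeasurable[𝒢] W)
    (hVW : μ[V|𝒢] =ᵐ[μ] W) :
    ∫ ω, (U ω - W ω) * (V ω - W ω) ∂μ = ∫ ω, condCov 𝒢 μ U V ω ∂μ := by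
  have hsplit : (fun ω => (U ω - W ω) * (V ω - W ω))
      = fun ω => (U ω * V ω - W ω * U ω) - W ω * (V ω - W ω) := by
    funext ω; ring
  have hUV := integrable_mul_of_memLp_two hU hV
  have hWU := integrable_mul_of_memLp_two hW hU
  have hdiff : Integrable (fun ω => U ω * V ω - W ω * U ω) μ := hUV.sub hWU
  have hnoise : Integrable (fun ω => W ω * (V ω - W ω)) μ :=
    integrable_mul_of_memLp_two hW (hV.sub hW)
  rw [hsplit, integral_sub hdiff hnoise,
    integral_mul_sub_eq_zero_of_condExp_ae_eq hm hV hW hW𝒢 hVW, sub_zero,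
    integral_sub hUV hWU,
    integral_condCov_of_condExp_ae_eq hm hU hW hW𝒢 hVW]

end

open RealInnerProductSpace in
theorem integral_inner_sub_eq_sum_integral_condCov_general
    {Ω : Type*} [mΩ : MeasurableSpace Ω] (P : Measure Ω) [IsProbabilityMeasure P]
    (m : ℕ) (x y : Ω → EuclideanSpace ℝ (Fin m))
    (hym : Measurable y)
    (hx : MemLp x 2 P) (hy : MemLp y 2 P)
    (hcond : condExpect (MeasurableSpace.comap y inferInstance) P x =ᵐ[P] y)
    (f : EuclideanSpace ℝ (Fin m) → EuclideanSpace ℝ (Fin m))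
    (hfx : MemLp (fun ω => f (x ω)) 2 P) :
    ∫ ω, ⟪f (x ω) - y ω, x ω - y ω⟫ ∂P =
      ∑ j : Fin m, ∫ ω, condCov (MeasurableSpace.comap y inferInstance) P
        (fun ω' => f (x ω') j) (fun ω' => x ω' j) ω ∂P := by
  set 𝒢 := MeasurableSpace.comap y inferInstance
  have hm : 𝒢 ≤ mΩ := hym.comap_le
  have hy𝒢 : Measurable[𝒢] y := Measurable.of_comap_le le_rfl
  simp_rw [PiLp.inner_apply, Real.inner_apply, PiLp.sub_apply]
  have hterm (j : Fin m) : Integrable (fun ω => (f (x ω) j - y ω j) * (x ω j - y ω j)) P :=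
    integrable_mul_of_memLp_two ((hfx.eval_piLp j).sub (hy.eval_piLp j))
      ((hx.eval_piLp j).sub (hy.eval_piLp j))
  rw [integral_finsetSum _ fun j _ => hterm j]
  refine sum_congr rfl fun j _ => integral_sub_mul_sub_eq_integral_condCov hm
    (hfx.eval_piLp j) (hx.eval_piLp j) (hy.eval_piLp j) ?_ ?_
  · exact ((PiLp.proj (𝕜 := ℝ) 2 _ j).measurable.comp hy𝒢).stronglyMeasurable
  · exact (condExp_piLp_apply_ae_eq (hx.integrable one_le_two) j).trans
      (hcond.mono fun ω h => congrArg (· j) h)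

open RealInnerProductSpace in
/-- **Cross term as a sum of expected conditional covariances.**
If `E[x | σ(y)] = y` a.s., then
`E[⟨f(x) − y, x − y⟩] = Σⱼ E[Cov(f(x)ⱼ, xⱼ | σ(y))]`. -/
theorem integral_inner_sub_eq_sum_integral_condCov
    {Ω : Type*} [mΩ : MeasurableSpace Ω] (P : Measure Ω) [IsProbabilityMeasure P]
    (m : ℕ) (x y : Ω → EuclideanSpace ℝ (Fin m))
    (hxm : Measurable x) (hym : Measurable y)
    (hx : MemLp x 2 P) (hy : MemLp y 2 P)
    (hcond : condExpect (MeasurableSpace.comap y inferInstance) P x =ᵐ[P] y)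
    (f : EuclideanSpace ℝ (Fin m) → EuclideanSpace ℝ (Fin m)) (hf : Measurable f)
    (hfx : MemLp (fun ω => f (x ω)) 2 P) :
    ∫ ω, ⟪f (x ω) - y ω, x ω - y ω⟫ ∂P =
      ∑ j : Fin m, ∫ ω, condCov (MeasurableSpace.comap y inferInstance) P
        (fun ω' => f (x ω') j) (fun ω' => x ω' j) ω ∂P :=
  integral_inner_sub_eq_sum_integral_condCov_general (mΩ := mΩ) P m x y hym hx hy hcond f hfx
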